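/- For every x, y > 0 with x ≠ y there exists t ∈ [√(xy), (x+y)/2] such that ln G⋆(x,y) = ((x-y)/2)² · ζ(2, 1+t). -/

import Mathlib

/-!
Euler's limit formula `Γ(s) = lim n^s n! / (s(s+1)⋯(s+n))` writes `log (Γ(1+x) Γ(1+y) / Γ(1+m)²)`, `m = (x+y)/2`, as
`∑ⱼ log (A_j² / ((1+x+j)(1+y+j)))` with `A_j = 1+m+j`, and `A_j² - (1+x+j)(1+y+j) = ((x-y)/2)²`.
The elementary bounds `1 - 1/q ≤ log q ≤ q - 1` squeeze each term between `((x-y)/2)²/A_j²` and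
`((x-y)/2)²/(1+√(xy)+j)²`, because `(1+√(xy)+j)² ≤ (1+x+j)(1+y+j)`. Summing, the logarithm lies
between `((x-y)/2)² ζ(2, 1+m)` and `((x-y)/2)² ζ(2, 1+√(xy))`, and the intermediate value theorem
for the continuous function `t ↦ ζ(2, 1+t)` produces `t`.
-/

open Real Filter Topology Finset Set

noncomputable def hurwitzZetaTwo (a : ℝ) : ℝ := ∑' n : ℕ, 1 / ((n : ℝ) + a) ^ 2

lemma summable_one_div_nat_add_sq (a : ℝ) : Summable fun n : ℕ => 1 / ((n : ℝ) + a) ^ 2 :=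
  ((summable_one_div_nat_add_rpow a 2).mpr one_lt_two).congr fun n => by
    rw [rpow_two, sq_abs]

lemma continuousOn_hurwitzZetaTwo {a : ℝ} (ha : 0 < a) :
    ContinuousOn hurwitzZetaTwo (Ici a) := by
  refine continuousOn_tsum (fun n => ?_) (summable_one_div_nat_add_sq a) fun n s hs => ?_
  · refine continuousOn_const.div (by fun_prop) fun s hs => ?_
    have : 0 < s := ha.trans_le hs
    positivity
  · have : a ≤ s := hs
    rw [norm_of_nonneg (by positivity)]
    gcongr

lemma exists_eq_mul_hurwitzZetaTwo_one_add {c L g m : ℝ} (hg : -1 < g) (hgm : g ≤ m)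
    (hlow : c * hurwitzZetaTwo (1 + m) ≤ L) (hup : L ≤ c * hurwitzZetaTwo (1 + g)) :
    ∃ t ∈ Icc g m, L = c * hurwitzZetaTwo (1 + t) := by
  have hcont : ContinuousOn (fun t => c * hurwitzZetaTwo (1 + t)) (Icc g m) :=
    continuousOn_const.mul <| (continuousOn_hurwitzZetaTwo (by linarith : 0 < 1 + g)).comp
      (by fun_prop) fun t ht => Set.mem_Ici.mpr (by linarith [ht.1])
  obtain ⟨t, ht, hL⟩ := intermediate_value_Icc' hgm hcont ⟨hlow, hup⟩
  exact ⟨t, ht, hL.symm⟩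

lemma GammaSeq_mul_GammaSeq_div_sq {n : ℕ} (hn : n ≠ 0) (a b : ℝ) :
    GammaSeq a n * GammaSeq b n / GammaSeq ((a + b) / 2) n ^ 2 =
      ∏ j ∈ range (n + 1), (((a + b) / 2 + j) ^ 2 / ((a + j) * (b + j))) := by
  have hn' : (0 : ℝ) < n := by positivity
  have hpow : (n : ℝ) ^ a * (n : ℝ) ^ b = ((n : ℝ) ^ ((a + b) / 2)) ^ 2 := by
    rw [← rpow_add hn', ← rpow_mul_natCast hn'.le]
    ring_nf
  have hne : ((n : ℝ) ^ ((a + b) / 2) * (n.factorial : ℝ)) ^ 2 ≠ 0 := by positivity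
  rw [prod_div_distrib, Finset.prod_pow, prod_mul_distrib]
  simp only [GammaSeq]
  rw [div_mul_div_comm, div_pow, mul_mul_mul_comm, hpow, ← sq (n.factorial : ℝ), ← mul_pow,
    div_div_div_cancel_left' _ _ hne]

lemma hasSum_log_Gamma_mul_Gamma_div_sq {a b : ℝ} (ha : 0 < a) (hb : 0 < b) :
    HasSum (fun j : ℕ => log (((a + b) / 2 + j) ^ 2 / ((a + j) * (b + j))))
      (log (Gamma a * Gamma b / Gamma ((a + b) / 2) ^ 2)) := by
  have hterm_pos (j : ℕ) : 0 < ((a + b) / 2 + j) ^ 2 / ((a + j) * (b + j)) := by positivity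
  have hterm_ge_one (j : ℕ) : 1 ≤ ((a + b) / 2 + j) ^ 2 / ((a + j) * (b + j)) := by
    rw [one_le_div (by positivity)]
    nlinarith [sq_nonneg (a - b)]
  rw [hasSum_iff_tendsto_nat_of_nonneg fun j => log_nonneg (hterm_ge_one j)]
  have hlim : Tendsto (fun n => log (GammaSeq a n * GammaSeq b n / GammaSeq ((a + b) / 2) n ^ 2))
      atTop (𝓝 (log (Gamma a * Gamma b / Gamma ((a + b) / 2) ^ 2))) :=
    (((GammaSeq_tendsto_Gamma a).mul (GammaSeq_tendsto_Gamma b)).div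
      ((GammaSeq_tendsto_Gamma _).pow 2) (by positivity)).log (by positivity)
  refine (tendsto_add_atTop_iff_nat 1).mp (hlim.congr' ?_)
  filter_upwards [eventually_ne_atTop 0] with n hn
  rw [GammaSeq_mul_GammaSeq_div_sq hn, log_prod fun j _ => (hterm_pos j).ne']

lemma div_sq_le_log_sq_div_mul {a b u : ℝ} (ha : 0 < a + u) (hb : 0 < b + u) :
    ((a - b) / 2) ^ 2 / ((a + b) / 2 + u) ^ 2 ≤
      log (((a + b) / 2 + u) ^ 2 / ((a + u) * (b + u))) := by
  have hmid : 0 < (a + b) / 2 + u := by linarith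
  calc ((a - b) / 2) ^ 2 / ((a + b) / 2 + u) ^ 2
      = 1 - (((a + b) / 2 + u) ^ 2 / ((a + u) * (b + u)))⁻¹ := by
        rw [inv_div, one_sub_div (by positivity)]
        ring
    _ ≤ _ := one_sub_inv_le_log_of_pos (by positivity)

lemma log_sq_div_mul_le_div_sq {a b g u : ℝ} (ha : 0 < a) (hb : 0 < b) (hg : 0 < g)
    (hgab : g ^ 2 ≤ a * b) (hu : 0 ≤ u) :
    log (((a + b) / 2 + u) ^ 2 / ((a + u) * (b + u))) ≤ ((a - b) / 2) ^ 2 / (g + u) ^ 2 := by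
  have hg_le : 2 * g ≤ a + b := by nlinarith [sq_nonneg (a - b)]
  have hprod : (g + u) ^ 2 ≤ (a + u) * (b + u) := by nlinarith
  calc log (((a + b) / 2 + u) ^ 2 / ((a + u) * (b + u)))
      ≤ ((a + b) / 2 + u) ^ 2 / ((a + u) * (b + u)) - 1 := log_le_sub_one_of_pos (by positivity)
    _ = ((a - b) / 2) ^ 2 / ((a + u) * (b + u)) := by
        rw [div_sub_one (by positivity)]
        ring
    _ ≤ ((a - b) / 2) ^ 2 / (g + u) ^ 2 := by gcongr

lemma sq_mul_hurwitzZetaTwo_le_log_Gamma {a b : ℝ} (ha : 0 < a) (hb : 0 < b) :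
    ((a - b) / 2) ^ 2 * hurwitzZetaTwo ((a + b) / 2) ≤
      log (Gamma a * Gamma b / Gamma ((a + b) / 2) ^ 2) := by
  have hsum := hasSum_log_Gamma_mul_Gamma_div_sq ha hb
  rw [hurwitzZetaTwo, ← tsum_mul_left, ← hsum.tsum_eq]
  refine ((summable_one_div_nat_add_sq _).mul_left _).tsum_le_tsum (fun j => ?_) hsum.summable
  rw [mul_one_div, add_comm (j : ℝ)]
  exact div_sq_le_log_sq_div_mul (by positivity) (by positivity)

lemma log_Gamma_le_sq_mul_hurwitzZetaTwo {a b g : ℝ} (ha : 0 < a) (hb : 0 < b) (hg : 0 < g)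
    (hgab : g ^ 2 ≤ a * b) :
    log (Gamma a * Gamma b / Gamma ((a + b) / 2) ^ 2) ≤
      ((a - b) / 2) ^ 2 * hurwitzZetaTwo g := by
  have hsum := hasSum_log_Gamma_mul_Gamma_div_sq ha hb
  rw [hurwitzZetaTwo, ← tsum_mul_left, ← hsum.tsum_eq]
  refine hsum.summable.tsum_le_tsum (fun j => ?_) ((summable_one_div_nat_add_sq _).mul_left _)
  rw [mul_one_div, add_comm (j : ℝ)]
  exact log_sq_div_mul_le_div_sq ha hb hg hgab j.cast_nonneg

theorem exists_mean_value_param_general (x y : ℝ) (hx : 0 < x) (hy : 0 < y) :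
    ∃ t ∈ Set.Icc (Real.sqrt (x * y)) ((x + y) / 2),
      Real.log (Real.Gamma (1 + x) * Real.Gamma (1 + y) /
          (Real.Gamma (1 + (x + y) / 2)) ^ 2) =
        ((x - y) / 2) ^ 2 * ∑' n : ℕ, 1 / ((n : ℝ) + (1 + t)) ^ 2 := by
  set g := √(x * y)
  have hg : 0 ≤ g := sqrt_nonneg _
  have hg_sq : g ^ 2 = x * y := sq_sqrt (by positivity)
  have hgm : g ≤ (x + y) / 2 := by nlinarith [sq_nonneg (x - y)]
  have hmid : (1 + x + (1 + y)) / 2 = 1 + (x + y) / 2 := by ring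
  have hdiff : (1 + x - (1 + y)) / 2 = (x - y) / 2 := by ring
  have ha : 0 < 1 + x := by linarith
  have hb : 0 < 1 + y := by linarith
  have hlow := sq_mul_hurwitzZetaTwo_le_log_Gamma ha hb
  have hup := log_Gamma_le_sq_mul_hurwitzZetaTwo ha hb (by positivity : 0 < 1 + g) (by nlinarith)
  rw [hmid, hdiff] at hlow hup
  exact exists_eq_mul_hurwitzZetaTwo_one_add (by linarith) hgm hlow hup

theorem exists_mean_value_param (x y : ℝ) (hx : 0 < x) (hy : 0 < y) (hxy : x ≠ y) :
    ∃ t ∈ Set.Icc (Real.sqrt (x * y)) ((x + y) / 2),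
      Real.log (Real.Gamma (1 + x) * Real.Gamma (1 + y) /
          (Real.Gamma (1 + (x + y) / 2)) ^ 2) =
        ((x - y) / 2) ^ 2 * ∑' n : ℕ, 1 / ((n : ℝ) + (1 + t)) ^ 2 :=
  exists_mean_value_param_general x y hx hy
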